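/- arXiv:0901.4683 — 7 statements merged into one kernel-verified Lean document; each statement's English description precedes it below -/
import Mathlib

section
/- Let p be a positive integer and let α, β be positive irrational real numbers with α < β and 1/α + 1/β = p. Then for every nonnegative integer k, the number of pairs (i,n) with i ∈ {1,2} and n a positive integer such that (i=1 and ⌊nα⌋ = k) or (i=2 and ⌊nβ⌋ = k), counted together with the multiplicities of k among ⌊0·α⌋ (i.e., including n=0 for the α-sequence), equals p. Precisely: for every n ∈ ℕ, ⌊n/α⌋ + ⌊n/β⌋ = np - 1 for n ≥ 1, and consequently each nonnegative integer k occurs exactly p times in total among the sequence (⌊nα⌋)_{n≥0} and the sequence (⌊nβ⌋)_{n≥1}. -/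
/-!
For `n ≥ 1` the numbers `n/α` and `n/β` are irrational and sum to the integer `np`, so their
fractional parts sum to `1`; this is the floor identity. The `n ≥ 0` with `⌊nα⌋ = k` are the
integers in `[⌈k/α⌉, ⌈(k+1)/α⌉)`, those `n ≥ 1` with `⌊nβ⌋ = k` the integers in
`[max 1 ⌈k/β⌉, ⌈(k+1)/β⌉)`, and `⌈m/α⌉ + max 1 ⌈m/β⌉ = mp + 1` for every `m ≥ 0`, so the two
counts add up to `((k+1)p + 1) - (kp + 1) = p`.
-/

open Set

namespace Irrational

theorem ceil_eq_floor_add_one {x : ℝ} (hx : Irrational x) : ⌈x⌉ = ⌊x⌋ + 1 :=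
  (Int.ceil_eq_floor_add_one_iff_notMem x).2 fun ⟨m, hm⟩ => hx.ne_int m hm.symm

theorem floor_add_floor_of_add_eq_intCast {x y : ℝ} {N : ℤ} (hx : Irrational x)
    (h : x + y = N) : ⌊x⌋ + ⌊y⌋ = N - 1 := by
  rw [show y = N + -x by linarith, Int.floor_intCast_add, Int.floor_neg, hx.ceil_eq_floor_add_one]
  ring

theorem ceil_add_ceil_of_add_eq_intCast {x y : ℝ} {N : ℤ} (hx : Irrational x)
    (h : x + y = N) : ⌈x⌉ + ⌈y⌉ = N + 1 := by
  rw [show y = N + -x by linarith, Int.ceil_intCast_add, Int.ceil_neg, hx.ceil_eq_floor_add_one]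
  ring

end Irrational

theorem setOf_floor_natCast_mul_eq {a : ℝ} (ha : 0 < a) (k : ℕ) :
    {n : ℕ | ⌊(n : ℝ) * a⌋ = k} = Ico ⌈(k : ℝ) / a⌉₊ ⌈((k + 1 : ℕ) : ℝ) / a⌉₊ := by
  ext n
  simp only [mem_ofPred_eq, mem_Ico, Int.floor_eq_iff, Nat.ceil_le, Nat.lt_ceil,
    div_le_iff₀ ha, lt_div_iff₀ ha]
  push_cast
  rfl

section ComplementaryPair

variable {α β : ℝ} {p : ℕ}

theorem natCast_div_add_natCast_div (hsum : 1 / α + 1 / β = p) (n : ℕ) :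
    (n : ℝ) / α + n / β = ((n * p : ℤ) : ℝ) := by
  push_cast
  rw [← hsum]
  ring

theorem floor_natCast_div_add_floor_natCast_div (hαirr : Irrational α)
    (hsum : 1 / α + 1 / β = p) {n : ℕ} (hn : 1 ≤ n) :
    ⌊(n : ℝ) / α⌋ + ⌊(n : ℝ) / β⌋ = n * p - 1 :=
  (hαirr.natCast_div (by omega)).floor_add_floor_of_add_eq_intCast
    (natCast_div_add_natCast_div hsum n)

theorem natCeil_div_add_max_one_natCeil_div (hα : 0 < α) (hβ : 0 < β) (hαirr : Irrational α)
    (hsum : 1 / α + 1 / β = p) (n : ℕ) :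
    ⌈(n : ℝ) / α⌉₊ + max 1 ⌈(n : ℝ) / β⌉₊ = n * p + 1 := by
  rcases Nat.eq_zero_or_pos n with rfl | hn
  · simp
  have hβ_pos : 1 ≤ ⌈(n : ℝ) / β⌉₊ := Nat.ceil_pos.2 (by positivity)
  have hceil := (hαirr.natCast_div hn.ne').ceil_add_ceil_of_add_eq_intCast
    (natCast_div_add_natCast_div hsum n)
  rw [← Int.natCast_ceil_eq_ceil (by positivity), ← Int.natCast_ceil_eq_ceil (by positivity)]
    at hceil
  rw [max_eq_right hβ_pos]
  exact_mod_cast hceil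

end ComplementaryPair

theorem stmt_0_general (p : ℕ) (α β : ℝ) (hα : 0 < α) (hβ : 0 < β)
    (hαirr : Irrational α)
    (hsum : 1/α + 1/β = p) :
    (∀ n : ℕ, 1 ≤ n → ⌊(n : ℝ)/α⌋ + ⌊(n : ℝ)/β⌋ = n * p - 1) ∧
    (∀ k : ℕ,
      Set.ncard {n : ℕ | ⌊(n : ℝ) * α⌋ = (k : ℤ)} +
      Set.ncard {n : ℕ | 1 ≤ n ∧ ⌊(n : ℝ) * β⌋ = (k : ℤ)} = p) := by
  refine ⟨fun n hn => floor_natCast_div_add_floor_natCast_div hαirr hsum hn, fun k => ?_⟩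
  have hβ_set : {n : ℕ | 1 ≤ n ∧ ⌊(n : ℝ) * β⌋ = (k : ℤ)} =
      Ico (max 1 ⌈(k : ℝ) / β⌉₊) ⌈((k + 1 : ℕ) : ℝ) / β⌉₊ := by
    ext n
    rw [mem_Ico, max_le_iff, and_assoc, ← mem_Ico, ← setOf_floor_natCast_mul_eq hβ]
    rfl
  rw [setOf_floor_natCast_mul_eq hα, hβ_set, ncard_Ico_nat, ncard_Ico_nat]
  have hk := natCeil_div_add_max_one_natCeil_div hα hβ hαirr hsum k
  have hk₁ := natCeil_div_add_max_one_natCeil_div hα hβ hαirr hsum (k + 1)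
  have hk_le : (k : ℝ) ≤ ((k + 1 : ℕ) : ℝ) := Nat.cast_le.2 k.le_succ
  have hα_mono : ⌈(k : ℝ) / α⌉₊ ≤ ⌈((k + 1 : ℕ) : ℝ) / α⌉₊ := Nat.ceil_mono (by gcongr)
  have hβ_mono : ⌈(k : ℝ) / β⌉₊ ≤ ⌈((k + 1 : ℕ) : ℝ) / β⌉₊ := Nat.ceil_mono (by gcongr)
  have hβ_pos : 1 ≤ ⌈((k + 1 : ℕ) : ℝ) / β⌉₊ := Nat.ceil_pos.2 (by positivity)
  rw [max_eq_right hβ_pos, add_one_mul] at hk₁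
  omega

theorem stmt_0 (p : ℕ) (hp : 1 ≤ p) (α β : ℝ) (hα : 0 < α) (hβ : 0 < β)
    (hαirr : Irrational α) (hβirr : Irrational β) (hlt : α < β)
    (hsum : 1/α + 1/β = p) :
    (∀ n : ℕ, 1 ≤ n → ⌊(n : ℝ)/α⌋ + ⌊(n : ℝ)/β⌋ = n * p - 1) ∧
    (∀ k : ℕ,
      Set.ncard {n : ℕ | ⌊(n : ℝ) * α⌋ = (k : ℤ)} +
      Set.ncard {n : ℕ | 1 ≤ n ∧ ⌊(n : ℝ) * β⌋ = (k : ℤ)} = p) :=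
  stmt_0_general p α β hα hβ hαirr hsum
end

section
/- Let α, β be positive irrational reals with 1/α + 1/β = p for a positive integer p. Then for every positive integer n, ⌊n/α⌋ + ⌊n/β⌋ = np - 1. -/
/-! The numbers `n/α` and `n/β` sum to the integer `np`, and `n/α` is irrational. For a
non-integer `a` one has `⌊m - a⌋ = m - ⌈a⌉ = m - ⌊a⌋ - 1`, so the two floors sum to `np - 1`. -/

theorem Int.floor_add_floor_of_add_eq_intCast {R : Type*} [Ring R] [LinearOrder R]
    [IsOrderedRing R] [FloorRing R] {a b : R} {m : ℤ} (ha : a ∉ Set.range Int.cast)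
    (hab : a + b = m) : ⌊a⌋ + ⌊b⌋ = m - 1 := by
  have hb : b = m + -a := by rw [← hab]; abel
  have hceil : ⌈a⌉ = ⌊a⌋ + 1 := (Int.ceil_eq_floor_add_one_iff_notMem a).mpr ha
  rw [hb, Int.floor_intCast_add, Int.floor_neg, hceil]
  ring

theorem stmt_1_general (p : ℕ) (α β : ℝ)
    (hαirr : Irrational α)
    (hsum : 1/α + 1/β = p) :
    ∀ n : ℕ, 1 ≤ n → ⌊(n : ℝ)/α⌋ + ⌊(n : ℝ)/β⌋ = n * p - 1 := by
  intro n hn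
  have hirr : Irrational ((n : ℝ) / α) := hαirr.natCast_div (by omega)
  have hadd : (n : ℝ) / α + (n : ℝ) / β = ((n * p : ℤ) : ℝ) := by
    rw [div_eq_mul_one_div, div_eq_mul_one_div (n : ℝ) β, ← mul_add, hsum]
    push_cast
    rfl
  exact Int.floor_add_floor_of_add_eq_intCast (fun ⟨k, hk⟩ => hirr.ne_int k hk.symm) hadd

theorem stmt_1 (p : ℕ) (hp : 1 ≤ p) (α β : ℝ) (hα : 0 < α) (hβ : 0 < β)
    (hαirr : Irrational α) (hβirr : Irrational β)
    (hsum : 1/α + 1/β = p) :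
    ∀ n : ℕ, 1 ≤ n → ⌊(n : ℝ)/α⌋ + ⌊(n : ℝ)/β⌋ = n * p - 1 :=
  stmt_1_general p α β hαirr hsum
end

section
/- Fix positive integers m and p with p ≥ 2, and define a_n = ⌊n·φ_{mp}/p⌋ and b_n = ⌊n·(φ_{mp} + mp)/p⌋ where φ_{mp} = (2 - mp + √((mp)²+4))/2. Then for every nonnegative integer n, either (a_{n+1} - a_n = 0 and b_{n+1} - b_n = m) or (a_{n+1} - a_n = 1 and b_{n+1} - b_n = m + 1). -/
/-! Since `b n = a n + n m` exactly, everything reduces to the increments of `a`, which are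
`⌊x + φ/p⌋ - ⌊x⌋` with `x = nφ/p`. The number `φ` lies in `[1, 2]` because
`mp ≤ √((mp)² + 4) ≤ mp + 2`, so `0 ≤ φ/p ≤ 1` and each increment is `0` or `1`. -/

theorem floor_add_sub_floor_eq_zero_or_one {R : Type*} [Ring R] [LinearOrder R]
    [IsStrictOrderedRing R] [FloorRing R] (x : R) {α : R} (h0 : 0 ≤ α) (h1 : α ≤ 1) :
    ⌊x + α⌋ - ⌊x⌋ = 0 ∨ ⌊x + α⌋ - ⌊x⌋ = 1 := by
  have hlow : ⌊x⌋ ≤ ⌊x + α⌋ := Int.floor_mono (le_add_of_nonneg_right h0)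
  have hup : ⌊x + α⌋ ≤ ⌊x⌋ + 1 := by
    rw [← Int.floor_add_one]
    exact Int.floor_mono (add_le_add_right h1 x)
  omega

theorem le_sqrt_sq_add_four (q : ℝ) : q ≤ √(q ^ 2 + 4) :=
  (le_abs_self q).trans (Real.abs_le_sqrt (by linarith))

theorem sqrt_sq_add_four_le {q : ℝ} (hq : 0 ≤ q) : √(q ^ 2 + 4) ≤ q + 2 :=
  (Real.sqrt_le_left (by linarith)).2 (by nlinarith)

theorem stmt_4_general (m p : ℕ) (hp : 2 ≤ p)
    (φ : ℝ) (hφ : φ = (2 - (m * p : ℝ) + Real.sqrt ((m * p : ℝ)^2 + 4)) / 2)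
    (a b : ℕ → ℤ)
    (ha : ∀ n : ℕ, a n = ⌊(n : ℝ) * φ / p⌋)
    (hb : ∀ n : ℕ, b n = ⌊(n : ℝ) * (φ + m * p) / p⌋) :
    ∀ n : ℕ, (a (n + 1) - a n = 0 ∧ b (n + 1) - b n = m) ∨
      (a (n + 1) - a n = 1 ∧ b (n + 1) - b n = m + 1) := by
  intro n
  have hp_pos : (0 : ℝ) < p := by positivity
  have hp_two : (2 : ℝ) ≤ p := by exact_mod_cast hp
  have hφ_nonneg : 0 ≤ φ := by linarith [le_sqrt_sq_add_four (m * p : ℝ)]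
  have hφ_le : φ ≤ p := by linarith [sqrt_sq_add_four_le (by positivity : (0 : ℝ) ≤ m * p)]
  have hb_eq : ∀ k : ℕ, b k = a k + k * m := by
    intro k
    rw [hb, ha, ← Int.floor_add_intCast]
    congr 1
    push_cast
    field_simp
  have ha_succ : a (n + 1) = ⌊(n : ℝ) * φ / p + φ / p⌋ := by
    rw [ha]
    push_cast
    ring_nf
  have hstep := floor_add_sub_floor_eq_zero_or_one ((n : ℝ) * φ / p)
    (div_nonneg hφ_nonneg hp_pos.le) ((div_le_one hp_pos).2 hφ_le)
  rw [← ha_succ, ← ha] at hstep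
  have hb_step : b (n + 1) - b n = a (n + 1) - a n + m := by
    rw [hb_eq, hb_eq]
    push_cast
    ring
  omega

theorem stmt_4 (m p : ℕ) (hm : 1 ≤ m) (hp : 2 ≤ p)
    (φ : ℝ) (hφ : φ = (2 - (m * p : ℝ) + Real.sqrt ((m * p : ℝ)^2 + 4)) / 2)
    (a b : ℕ → ℤ)
    (ha : ∀ n : ℕ, a n = ⌊(n : ℝ) * φ / p⌋)
    (hb : ∀ n : ℕ, b n = ⌊(n : ℝ) * (φ + m * p) / p⌋) :
    ∀ n : ℕ, (a (n + 1) - a n = 0 ∧ b (n + 1) - b n = m) ∨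
      (a (n + 1) - a n = 1 ∧ b (n + 1) - b n = m + 1) :=
  stmt_4_general m p hp φ hφ a b ha hb
end

section
/- Fix positive integers m and p, and define a_n = ⌊n·φ_{mp}/p⌋, b_n = ⌊n·(φ_{mp} + mp)/p⌋, where φ_{mp} = (2 - mp + √((mp)²+4))/2. Then the sequences (a_n)_{n≥0} and (b_n)_{n≥1} are p-complementary on the nonnegative integers: for every integer k ≥ 0, #{n ≥ 0 : a_n = k} + #{n ≥ 1 : b_n = k} = p. -/
/-!
Write `q = m p` and let `σ = (q + √(q² + 4)) / 2`, the positive root of `σ² = q σ + 1`. Then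
`φ = 1 + σ⁻¹` and `φ + q = 1 + σ`, so `φ` and `φ + q` are irrational Hölder conjugates:
`1/φ + 1/(φ + q) = 1`. For such a pair `r, s` and `N ≥ 1`, Beatty's identity
`⌈N/r⌉ + ⌈N/s⌉ = N + 1` says that exactly `N` of the numbers `n r` (`n ≥ 0`) and `n s` (`n ≥ 1`)
lie below `N`. Since `⌊n r / p⌋ = k` iff `k p ≤ n r < (k + 1) p`, the count for `k` is the
difference of these counts at `N = (k + 1) p` and `N = k p`, which is `p`.
-/

theorem Irrational.ceil_eq_floor_add_one_s6 {x : ℝ} (h : Irrational x) : ⌈x⌉ = ⌊x⌋ + 1 :=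
  (Int.ceil_eq_floor_add_one_iff_notMem x).mpr fun ⟨z, hz⟩ => h.ne_int z hz.symm

theorem Int.floor_div_eq_iff {y c : ℝ} (hc : 0 < c) {k : ℤ} :
    ⌊y / c⌋ = k ↔ k * c ≤ y ∧ y < (k + 1) * c := by
  rw [Int.floor_eq_iff, le_div_iff₀ hc, div_lt_iff₀ hc]

theorem natCast_mul_lt_iff_lt_ceil {r : ℝ} (hr : 0 < r) (x : ℝ) (n : ℕ) :
    n * r < x ↔ (n : ℤ) < ⌈x / r⌉ := by
  rw [Int.lt_ceil, lt_div_iff₀ hr, Int.cast_natCast]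

theorem finite_setOf_natCast_mul_lt {r : ℝ} (hr : 0 < r) (x : ℝ) :
    {n : ℕ | n * r < x}.Finite :=
  (Set.finite_Iio ⌈x / r⌉.toNat).subset fun n hn => by
    simp only [Set.mem_ofPred_eq, natCast_mul_lt_iff_lt_ceil hr] at hn
    simp only [Set.mem_Iio]
    omega

theorem ncard_setOf_natCast_mul_lt {r : ℝ} (hr : 0 < r) (x : ℝ) :
    {n : ℕ | n * r < x}.ncard = ⌈x / r⌉.toNat := by
  have : {n : ℕ | n * r < x} = Finset.range ⌈x / r⌉.toNat := by
    ext n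
    simp only [natCast_mul_lt_iff_lt_ceil hr, Set.mem_ofPred_eq, Finset.coe_range, Set.mem_Iio]
    omega
  rw [this, Set.ncard_coe_finset, Finset.card_range]

theorem ncard_setOf_one_le_and_natCast_mul_lt {r : ℝ} (hr : 0 < r) (x : ℝ) :
    {n : ℕ | 1 ≤ n ∧ n * r < x}.ncard = (⌈x / r⌉ - 1).toNat := by
  have : {n : ℕ | 1 ≤ n ∧ n * r < x} = Finset.Ico 1 ⌈x / r⌉.toNat := by
    ext n
    simp only [natCast_mul_lt_iff_lt_ceil hr, Set.mem_ofPred_eq, Finset.coe_Ico, Set.mem_Ico]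
    omega
  rw [this, Set.ncard_coe_finset, Nat.card_Ico]
  omega

theorem Real.HolderConjugate.ceil_div_add_ceil_div {r s : ℝ} (hrs : r.HolderConjugate s)
    (hr : Irrational r) {N : ℕ} (hN : N ≠ 0) : ⌈N / r⌉ + ⌈N / s⌉ = N + 1 := by
  have hs : (N : ℝ) / s = N - N / r := by
    rw [eq_sub_iff_add_eq, div_eq_mul_inv, div_eq_mul_inv, ← mul_add,
      hrs.symm.inv_add_inv_eq_one, mul_one]
  rw [hs, sub_eq_neg_add, Int.ceil_add_natCast, Int.ceil_neg,
    (hr.natCast_div hN).ceil_eq_floor_add_one_s6]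
  ring

theorem Real.HolderConjugate.ncard_mul_lt_add_ncard_mul_lt {r s : ℝ} (hrs : r.HolderConjugate s)
    (hr : Irrational r) (N : ℕ) :
    {n : ℕ | n * r < N}.ncard + {n : ℕ | 1 ≤ n ∧ n * s < N}.ncard = N := by
  rw [ncard_setOf_natCast_mul_lt hrs.pos, ncard_setOf_one_le_and_natCast_mul_lt hrs.symm.pos]
  rcases eq_or_ne N 0 with rfl | hN
  · simp
  have := hrs.ceil_div_add_ceil_div hr hN
  have hr' : 0 < ⌈(N : ℝ) / r⌉ := Int.ceil_pos.mpr (div_pos (by positivity) hrs.pos)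
  have hs' : 0 < ⌈(N : ℝ) / s⌉ := Int.ceil_pos.mpr (div_pos (by positivity) hrs.symm.pos)
  omega

theorem Real.HolderConjugate.ncard_floor_div_eq_add_ncard_floor_div_eq {r s : ℝ}
    (hrs : r.HolderConjugate s) (hr : Irrational r) {p : ℕ} (hp : p ≠ 0) (k : ℕ) :
    {n : ℕ | ⌊n * r / p⌋ = k}.ncard + {n : ℕ | 1 ≤ n ∧ ⌊n * s / p⌋ = k}.ncard = p := by
  have hp' : (0 : ℝ) < p := by positivity
  have hA : {n : ℕ | ⌊n * r / p⌋ = k} =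
      {n : ℕ | n * r < ((k + 1) * p : ℕ)} \ {n : ℕ | n * r < (k * p : ℕ)} := by
    ext n
    simp only [Int.floor_div_eq_iff hp', Set.mem_sdiff, Set.mem_ofPred_eq, not_lt]
    push_cast
    tauto
  have hB : {n : ℕ | 1 ≤ n ∧ ⌊n * s / p⌋ = k} =
      {n : ℕ | 1 ≤ n ∧ n * s < ((k + 1) * p : ℕ)} \ {n : ℕ | 1 ≤ n ∧ n * s < (k * p : ℕ)} := by
    ext n
    simp only [Int.floor_div_eq_iff hp', Set.mem_sdiff, Set.mem_ofPred_eq, not_and, not_lt]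
    push_cast
    tauto
  have hN : ((k * p : ℕ) : ℝ) ≤ ((k + 1) * p : ℕ) := by gcongr; omega
  have hA' := Set.ncard_sdiff_add_ncard_of_subset
    (s := {n : ℕ | n * r < (k * p : ℕ)}) (t := {n : ℕ | n * r < ((k + 1) * p : ℕ)})
    (fun n hn => hn.trans_le hN) (finite_setOf_natCast_mul_lt hrs.pos _)
  have hB' := Set.ncard_sdiff_add_ncard_of_subset
    (s := {n : ℕ | 1 ≤ n ∧ n * s < (k * p : ℕ)})
    (t := {n : ℕ | 1 ≤ n ∧ n * s < ((k + 1) * p : ℕ)})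
    (fun n hn => ⟨hn.1, hn.2.trans_le hN⟩)
    ((finite_setOf_natCast_mul_lt hrs.symm.pos _).subset fun _ => And.right)
  rw [← hA] at hA'
  rw [← hB] at hB'
  have h1 := hrs.ncard_mul_lt_add_ncard_mul_lt hr (k * p)
  have h2 := (hrs.ncard_mul_lt_add_ncard_mul_lt hr ((k + 1) * p)).trans (add_one_mul k p)
  omega

theorem Real.HolderConjugate.one_add_inv_one_add {σ : ℝ} (hσ : 0 < σ) :
    (1 + σ⁻¹).HolderConjugate (1 + σ) :=
  Real.holderConjugate_iff.mpr ⟨by simpa using hσ, by field_simp; ring⟩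

theorem Nat.not_isSquare_sq_add_four {q : ℕ} (hq : q ≠ 0) : ¬IsSquare (q ^ 2 + 4) := by
  rintro ⟨r, hr⟩
  have hq1 : 1 ≤ q := Nat.one_le_iff_ne_zero.mpr hq
  have hqr : q < r := by nlinarith
  have hrq : r < q + 2 := by nlinarith
  obtain rfl : r = q + 1 := by omega
  ring_nf at hr
  omega

theorem irrational_sqrt_natCast_sq_add_four {q : ℕ} (hq : q ≠ 0) :
    Irrational √((q : ℝ) ^ 2 + 4) := by
  exact_mod_cast irrational_sqrt_natCast_iff.mpr (Nat.not_isSquare_sq_add_four hq)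

theorem stmt_6 (m p : ℕ) (hm : 1 ≤ m) (hp : 1 ≤ p)
    (φ : ℝ) (hφ : φ = (2 - (m * p : ℝ) + Real.sqrt ((m * p : ℝ)^2 + 4)) / 2)
    (a b : ℕ → ℤ)
    (ha : ∀ n : ℕ, a n = ⌊(n : ℝ) * φ / p⌋)
    (hb : ∀ n : ℕ, b n = ⌊(n : ℝ) * (φ + m * p) / p⌋) :
    ∀ k : ℕ,
      Set.ncard {n : ℕ | a n = (k : ℤ)} +
      Set.ncard {n : ℕ | 1 ≤ n ∧ b n = (k : ℤ)} = p := by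
  have hq : m * p ≠ 0 := by positivity
  have hq_cast : ((m * p : ℕ) : ℝ) = m * p := Nat.cast_mul m p
  set q : ℝ := m * p
  set σ : ℝ := (q + √(q ^ 2 + 4)) / 2 with hσ_def
  have hσ_pos : 0 < σ := by positivity
  have hσ_inv : σ⁻¹ = (√(q ^ 2 + 4) - q) / 2 := by
    have hsq : √(q ^ 2 + 4) ^ 2 = q ^ 2 + 4 := Real.sq_sqrt (by positivity)
    refine (eq_inv_of_mul_eq_one_left ?_).symm
    linear_combination hsq / 4
  have hσ_irr : Irrational σ := by
    have := (irrational_sqrt_natCast_sq_add_four hq).natCast_add (m * p)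
    rw [hq_cast] at this
    exact_mod_cast this.div_natCast two_ne_zero
  have hφσ : φ = 1 + σ⁻¹ := by rw [hφ, hσ_inv]; ring
  have hconj : φ.HolderConjugate (φ + q) := by
    convert Real.HolderConjugate.one_add_inv_one_add hσ_pos using 1
    rw [hφσ, hσ_inv, hσ_def]; ring
  have hφ_irr : Irrational φ := by
    rw [hφσ]
    exact_mod_cast hσ_irr.inv.natCast_add 1
  intro k
  simp only [ha, hb]
  exact hconj.ncard_floor_div_eq_add_ncard_floor_div_eq hφ_irr (Nat.pos_iff_ne_zero.mp hp) k
end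

section
/- Fix a positive integer m, and let a_n = ⌊n·φ_m⌋ and b_n = ⌊n·(φ_m + m)⌋ where φ_m = (2 - m + √(m²+4))/2. Then for every positive integer n, a_{b_n - n} = b_n - 1. -/
/-!
Put `s = √(m² + 4)`, `α = (s - m)/2 = φ - 1` and `β = (s + m)/2 = φ + m - 1`, so that `α β = 1`,
`0 < α ≤ 1` and `β` is irrational. Then `b_n - n = ⌊nβ⌋ =: k` and `a_k = k + ⌊kα⌋`. Since `nβ` is
irrational, `k < nβ < k + 1`; multiplying by `α` gives `kα < n < kα + α ≤ kα + 1`, i.e. `⌊kα⌋ = n - 1`.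
-/

theorem Int.floor_floor_mul_eq_sub_one {x α : ℝ} {n : ℤ} (hx : Irrational x) (hα₀ : 0 < α)
    (hα₁ : α ≤ 1) (hxα : x * α = n) : ⌊(⌊x⌋ : ℝ) * α⌋ = n - 1 := by
  have hlt : (⌊x⌋ : ℝ) < x := (Int.floor_le x).lt_of_ne (hx.ne_int _).symm
  have hlt' : x < ⌊x⌋ + 1 := Int.lt_floor_add_one x
  rw [Int.floor_eq_iff]
  push_cast
  constructor <;> nlinarith

theorem Nat.not_isSquare_sq_add_four_s10 {m : ℕ} (hm : m ≠ 0) : ¬IsSquare (m ^ 2 + 4) := by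
  rintro ⟨r, hr⟩
  have h₁ : m < r := by nlinarith
  have h₂ : r < m + 2 := by
    have : 1 ≤ m := Nat.one_le_iff_ne_zero.mpr hm
    nlinarith
  obtain rfl : r = m + 1 := by omega
  ring_nf at hr
  omega

theorem irrational_sqrt_sq_add_four {m : ℕ} (hm : m ≠ 0) : Irrational √((m : ℝ) ^ 2 + 4) := by
  have := irrational_sqrt_natCast_iff.mpr (Nat.not_isSquare_sq_add_four_s10 hm)
  push_cast at this
  exact this

section Conjugates

variable {t : ℝ}

theorem sqrt_sq_add_four_sub_div_two_mul_add_div_two :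
    (√(t ^ 2 + 4) - t) / 2 * ((√(t ^ 2 + 4) + t) / 2) = 1 := by
  have := Real.sq_sqrt (show 0 ≤ t ^ 2 + 4 by positivity)
  linear_combination this / 4

theorem sqrt_sq_add_four_sub_div_two_pos : 0 < (√(t ^ 2 + 4) - t) / 2 := by
  have : |t| < √(t ^ 2 + 4) := (Real.lt_sqrt (abs_nonneg t)).mpr (by rw [sq_abs]; linarith)
  linarith [le_abs_self t]

theorem sqrt_sq_add_four_sub_div_two_le_one (ht : 0 ≤ t) : (√(t ^ 2 + 4) - t) / 2 ≤ 1 := by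
  have : √(t ^ 2 + 4) ≤ t + 2 := Real.sqrt_le_iff.mpr ⟨by linarith, by nlinarith⟩
  linarith

end Conjugates

theorem stmt_10 (m : ℕ) (hm : 1 ≤ m)
    (φ : ℝ) (hφ : φ = (2 - (m : ℝ) + Real.sqrt ((m : ℝ)^2 + 4)) / 2)
    (a b : ℕ → ℤ)
    (ha : ∀ n : ℕ, a n = ⌊(n : ℝ) * φ⌋)
    (hb : ∀ n : ℕ, b n = ⌊(n : ℝ) * (φ + m)⌋) :
    ∀ n : ℕ, 1 ≤ n → a ((b n - n).toNat) = b n - 1 := by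
  intro n hn
  set α := (√((m : ℝ) ^ 2 + 4) - m) / 2
  set β := (√((m : ℝ) ^ 2 + 4) + m) / 2
  have hβ : Irrational β := by
    simpa using ((irrational_sqrt_sq_add_four (by omega)).add_natCast m).div_natCast two_ne_zero
  have hk : b n - n = ⌊(n : ℝ) * β⌋ := by
    rw [hb, show (n : ℝ) * (φ + m) = n * β + n by rw [hφ]; ring, Int.floor_add_natCast,
      add_sub_cancel_right]
  have hk₀ : ((b n - n).toNat : ℝ) = ⌊(n : ℝ) * β⌋ := by
    rw [hk]; exact_mod_cast Int.toNat_of_nonneg (Int.floor_nonneg.mpr (by positivity))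
  have hkα : ⌊(⌊(n : ℝ) * β⌋ : ℝ) * α⌋ = n - 1 :=
    Int.floor_floor_mul_eq_sub_one (hβ.natCast_mul (by omega)) sqrt_sq_add_four_sub_div_two_pos
      (sqrt_sq_add_four_sub_div_two_le_one (Nat.cast_nonneg m))
      (by rw [mul_assoc, mul_comm β, sqrt_sq_add_four_sub_div_two_mul_add_div_two, mul_one,
        Int.cast_natCast])
  rw [ha, hk₀, show φ = α + 1 by rw [hφ]; ring, mul_add_one, Int.floor_add_intCast, hkα]
  omega
end

section
/- Let a_n = ⌊n·φ⌋ and b_n = ⌊n·φ²⌋ where φ = (1+√5)/2 is the golden ratio. Then for every positive integer n, a_{a_n} = b_n - 1 (Kimberling's complementary equation for the Wythoff sequences). -/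
/-!
Write `m = ⌊nφ⌋` and `f = fract (nφ)`, so that `0 < f < 1` by irrationality of `φ` when `n ≠ 0`.
Since `φ² = φ + 1`, we get `⌊nφ²⌋ = m + n`, while `mφ = (nφ - f)φ = m + n - f(φ - 1)` with
`0 < f(φ - 1) < 1`, hence `⌊mφ⌋ = m + n - 1`.
-/

namespace Real

open goldenRatio

theorem floor_intCast_mul_goldenRatio_sq (z : ℤ) : ⌊(z : ℝ) * φ ^ 2⌋ = ⌊(z : ℝ) * φ⌋ + z := by
  rw [goldenRatio_sq, mul_add, mul_one, Int.floor_add_intCast]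

theorem fract_intCast_mul_goldenRatio_pos {z : ℤ} (hz : z ≠ 0) : 0 < Int.fract ((z : ℝ) * φ) :=
  Int.fract_pos.mpr ((goldenRatio_irrational.intCast_mul hz).ne_int _)

theorem floor_intCast_mul_goldenRatio_mul_goldenRatio {z : ℤ} (hz : z ≠ 0) :
    ⌊(⌊(z : ℝ) * φ⌋ : ℝ) * φ⌋ = ⌊(z : ℝ) * φ⌋ + z - 1 := by
  set f := Int.fract ((z : ℝ) * φ)
  have hf_pos : 0 < f := fract_intCast_mul_goldenRatio_pos hz
  have hf_lt_one : f < 1 := Int.fract_lt_one _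
  have hfloor : (⌊(z : ℝ) * φ⌋ : ℝ) = z * φ - f := (Int.self_sub_fract _).symm
  have hmul : (⌊(z : ℝ) * φ⌋ : ℝ) * φ = ⌊(z : ℝ) * φ⌋ + z - f * (φ - 1) := by
    rw [hfloor]
    linear_combination (z : ℝ) * goldenRatio_sq
  have hφ₁ := one_lt_goldenRatio
  have hφ₂ := goldenRatio_lt_two
  rw [Int.floor_eq_iff, hmul]
  push_cast
  constructor <;> nlinarith

end Real

theorem stmt_11 (φ : ℝ) (hφ : φ = (1 + Real.sqrt 5) / 2)
    (a b : ℕ → ℤ)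
    (ha : ∀ n : ℕ, a n = ⌊(n : ℝ) * φ⌋)
    (hb : ∀ n : ℕ, b n = ⌊(n : ℝ) * φ^2⌋) :
    ∀ n : ℕ, 1 ≤ n → a ((a n).toNat) = b n - 1 := by
  intro n hn
  obtain rfl : φ = Real.goldenRatio := hφ
  have han : ((a n).toNat : ℝ) = ⌊(n : ℝ) * Real.goldenRatio⌋ := by
    rw [ha]
    exact_mod_cast Int.toNat_of_nonneg (Int.floor_nonneg.mpr (by positivity))
  have hfloor := Real.floor_intCast_mul_goldenRatio_mul_goldenRatio (z := n) (by omega)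
  have hfloor_sq := Real.floor_intCast_mul_goldenRatio_sq n
  rw [Int.cast_natCast] at hfloor hfloor_sq
  rw [ha, han, hb, hfloor, hfloor_sq]
end

section
/- Let p ≥ 2 be an integer, and let 0 < α < β be irrational reals with 1/α + 1/β = p. Fix an integer l with 0 ≤ l < p, and define x_i = ⌊α·i⌋ (i ≥ 0) and y_i = ⌊β·i⌋ (i ≥ 1). Then the two sequences (x_{pi+l})_{i≥0} and (y_{pi-l})_{i≥1} are complementary on ℕ₀: every nonnegative integer occurs exactly once in total among them. -/
/-!
Put `θ s = (s / α - l) / p`. Solving the floor equations for `i` shows that `x (p i + l) = k`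
exactly when `i ∈ [θ k, θ (k + 1))`, and, because `1 / β = p - 1 / α`, that `y (p i - l) = k`
with `i ≥ 1` exactly when `k + 1 - i ∈ (θ (k + 1), θ k + 1)`. Since `θ (k + 1) - θ k = 1 / (p α)`
lies in `[0, 1]`, these two windows make up `[θ k, θ k + 1)` except for the irrational point
`θ (k + 1)`, and that interval contains exactly one integer, `⌈θ k⌉`.
-/

theorem Int.floor_mul_affine_eq_iff {a q : ℝ} (ha : 0 < a) (hq : 0 < q) (r c : ℝ) (k : ℤ) :
    ⌊a * (q * r + c)⌋ = k ↔ (k / a - c) / q ≤ r ∧ r < ((k + 1) / a - c) / q := by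
  rw [Int.floor_eq_iff, div_le_iff₀ hq, lt_div_iff₀ hq, sub_le_iff_le_add, lt_sub_iff_add_lt,
    div_le_iff₀ ha, lt_div_iff₀ ha]
  constructor <;> rintro ⟨h1, h2⟩ <;> constructor <;> linarith

theorem Int.ncard_Ico_add_ncard_Ioo_eq_one {u v : ℝ} (huv : u ≤ v) (hvu : v ≤ u + 1)
    (hv : ∀ m : ℤ, (m : ℝ) ≠ v) :
    {i : ℤ | u ≤ i ∧ (i : ℝ) < v}.ncard + {i : ℤ | v < i ∧ (i : ℝ) < u + 1}.ncard = 1 := by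
  have hceil : ∀ i : ℤ, u ≤ i → (i : ℝ) < u + 1 → i = ⌈u⌉ := fun i h1 h2 =>
    (Int.ceil_eq_iff.mpr ⟨by linarith, h1⟩).symm
  have hle := Int.le_ceil u
  have hlt := Int.ceil_lt_add_one u
  rcases (hv ⌈u⌉).lt_or_gt with h | h
  · have h1 : {i : ℤ | u ≤ i ∧ (i : ℝ) < v} = {⌈u⌉} :=
      Set.eq_singleton_iff_unique_mem.mpr
        ⟨⟨hle, h⟩, fun i ⟨h1, h2⟩ => hceil i h1 (by linarith)⟩
    have h2 : {i : ℤ | v < i ∧ (i : ℝ) < u + 1} = ∅ :=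
      Set.eq_empty_iff_forall_notMem.mpr fun i ⟨h1, h2⟩ => by
        have := hceil i (by linarith) h2
        subst this
        linarith
    simp [h1, h2]
  · have h1 : {i : ℤ | u ≤ i ∧ (i : ℝ) < v} = ∅ :=
      Set.eq_empty_iff_forall_notMem.mpr fun i ⟨h1, h2⟩ => by
        have := hceil i h1 (by linarith)
        subst this
        linarith
    have h2 : {i : ℤ | v < i ∧ (i : ℝ) < u + 1} = {⌈u⌉} :=
      Set.eq_singleton_iff_unique_mem.mpr
        ⟨⟨h, hlt⟩, fun i ⟨h1, h2⟩ => hceil i (by linarith) h2⟩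
    simp [h1, h2]

noncomputable def beattyThreshold (α : ℝ) (p l : ℕ) (s : ℝ) : ℝ := (s / α - l) / p

namespace beattyThreshold

variable {α : ℝ} {p l : ℕ}

theorem add_one (s : ℝ) :
    beattyThreshold α p l (s + 1) = beattyThreshold α p l s + 1 / (p * α) := by
  unfold beattyThreshold
  ring

theorem self_sub_eq {β : ℝ} (hα : α ≠ 0) (hsum : 1 / α + 1 / β = p) (hp : p ≠ 0) (s : ℝ) :
    s - beattyThreshold α p l s = (s / β + l) / p := by
  have hβ : s / β = s * p - s / α := by rw [div_eq_mul_one_div s β, ← hsum]; ring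
  unfold beattyThreshold
  rw [hβ]
  field_simp
  ring

theorem neg_one_lt (hα : 0 < α) (hl : l < p) {s : ℝ} (hs : 0 ≤ s) :
    -1 < beattyThreshold α p l s := by
  have hp : (0 : ℝ) < p := by exact_mod_cast (l.zero_le.trans_lt hl)
  have hl' : (l : ℝ) < p := by exact_mod_cast hl
  rw [beattyThreshold, lt_div_iff₀ hp]
  have : 0 ≤ s / α := by positivity
  linarith

theorem le_self {β : ℝ} (hα : 0 < α) (hβ : 0 < β) (hsum : 1 / α + 1 / β = p) (hp : p ≠ 0)
    {s : ℝ} (hs : 0 ≤ s) : beattyThreshold α p l s ≤ s := by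
  have := self_sub_eq (l := l) hα.ne' hsum hp s
  have : 0 ≤ (s / β + l) / p := by positivity
  linarith

theorem add_one_mem_Icc {β : ℝ} (hα : 0 < α) (hβ : 0 < β) (hsum : 1 / α + 1 / β = p) (s : ℝ) :
    beattyThreshold α p l (s + 1) ∈
      Set.Icc (beattyThreshold α p l s) (beattyThreshold α p l s + 1) := by
  have hpα : 1 ≤ p * α := by
    have : 0 < 1 / β := by positivity
    have : 1 / α ≤ p := by linarith
    rwa [div_le_iff₀ hα] at this
  rw [add_one]
  constructor
  · have : 0 ≤ 1 / (p * α) := by positivity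
    linarith
  · gcongr
    exact div_le_one_of_le₀ hpα (by positivity)

theorem irrational (hα : Irrational α) (hp : p ≠ 0) {s : ℕ} (hs : s ≠ 0) :
    Irrational (beattyThreshold α p l s) :=
  ((hα.natCast_div hs).sub_natCast l).div_natCast hp

theorem floor_eq_iff (hα : 0 < α) (hp : 0 < p) (i : ℕ) (k : ℤ) :
    ⌊α * ((p * i + l : ℕ) : ℝ)⌋ = k ↔
      beattyThreshold α p l k ≤ i ∧ (i : ℝ) < beattyThreshold α p l (k + 1) := by
  push_cast
  exact Int.floor_mul_affine_eq_iff hα (by exact_mod_cast hp) _ _ k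

theorem floor_sub_eq_iff {β : ℝ} (hα : 0 < α) (hβ : 0 < β) (hsum : 1 / α + 1 / β = p)
    (hp : 0 < p) {i : ℕ} (hi : l ≤ p * i) (k : ℤ) :
    ⌊β * ((p * i - l : ℕ) : ℝ)⌋ = k ↔
      k - beattyThreshold α p l k ≤ i ∧ (i : ℝ) < k + 1 - beattyThreshold α p l (k + 1) := by
  rw [Nat.cast_sub hi, self_sub_eq hα.ne' hsum hp.ne', self_sub_eq hα.ne' hsum hp.ne',
    Nat.cast_mul, sub_eq_add_neg, Int.floor_mul_affine_eq_iff hβ (by exact_mod_cast hp),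
    sub_neg_eq_add, sub_neg_eq_add]

theorem ncard_floor_eq (hα : 0 < α) (hl : l < p) (k : ℕ) :
    {i : ℕ | ⌊α * ((p * i + l : ℕ) : ℝ)⌋ = k}.ncard =
      {i : ℤ | beattyThreshold α p l k ≤ i ∧ (i : ℝ) < beattyThreshold α p l (k + 1)}.ncard := by
  rw [← Set.ncard_preimage_of_injective_subset_range (f := ((↑) : ℕ → ℤ)) Nat.cast_injective]
  · congr 1
    ext i
    simpa using floor_eq_iff hα (l.zero_le.trans_lt hl) i k
  · rintro i ⟨hi, -⟩
    have : (-1 : ℝ) < i := (neg_one_lt hα hl k.cast_nonneg).trans_le hi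
    exact ⟨i.toNat, by norm_cast at this; omega⟩

theorem ncard_floor_sub_eq {β : ℝ} (hα : 0 < α) (hβ : 0 < β) (hsum : 1 / α + 1 / β = p)
    (hαirr : Irrational α) (hl : l < p) (k : ℕ) :
    {i : ℕ | 1 ≤ i ∧ ⌊β * ((p * i - l : ℕ) : ℝ)⌋ = k}.ncard =
      {i : ℤ | beattyThreshold α p l (k + 1) < i ∧
        (i : ℝ) < beattyThreshold α p l k + 1}.ncard := by
  have hp : 0 < p := l.zero_le.trans_lt hl
  have hθ := le_self (l := l) hα hβ hsum hp.ne' k.cast_nonneg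
  -- `k - θ k` is irrational for `k ≠ 0`, and equals `l / p < 1` for `k = 0`
  have hstrict : ∀ i : ℕ, 1 ≤ i ∧ k - beattyThreshold α p l k ≤ i ↔
      k - beattyThreshold α p l k < i := by
    intro i
    refine ⟨fun ⟨hi, hle⟩ => hle.lt_of_ne ?_, fun h => ⟨?_, h.le⟩⟩
    · rcases Nat.eq_zero_or_pos k with rfl | hk
      · have := neg_one_lt (l := l) hα hl le_rfl
        have : (1 : ℝ) ≤ i := by exact_mod_cast hi
        rw [Nat.cast_zero]
        exact ne_of_lt (by linarith)
      · intro h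
        exact (irrational hαirr hp.ne' hk.ne').ne_int (k - i) (by push_cast; linarith)
    · have : (0 : ℝ) < i := by linarith
      exact_mod_cast this
  rw [← Set.ncard_preimage_of_injective_subset_range (f := fun i : ℕ => (k : ℤ) + 1 - i)
    (fun i j h => by simpa using h)]
  · congr 1
    ext i
    have hli : 1 ≤ i → l ≤ p * i := fun hi => hl.le.trans (Nat.le_mul_of_pos_right p hi)
    simp only [Set.mem_ofPred_eq, Set.mem_preimage, Int.cast_sub, Int.cast_add, Int.cast_one,
      Int.cast_natCast]
    constructor
    · rintro ⟨hi1, h⟩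
      rw [floor_sub_eq_iff hα hβ hsum hp (hli hi1), Int.cast_natCast] at h
      have := (hstrict i).mp ⟨hi1, h.1⟩
      constructor <;> linarith [h.2]
    · rintro ⟨h1, h2⟩
      obtain ⟨hi1, hle⟩ := (hstrict i).mpr (by linarith)
      rw [floor_sub_eq_iff hα hβ hsum hp (hli hi1), Int.cast_natCast]
      exact ⟨hi1, hle, by linarith⟩
  · rintro i ⟨-, hi⟩
    have : (i : ℝ) < k + 1 := by linarith
    exact ⟨(k + 1 - i).toNat, by norm_cast at this; simp only; omega⟩

end beattyThreshold

theorem stmt_12_general (p : ℕ) (α β : ℝ) (hα : 0 < α) (hlt : α < β)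
    (hαirr : Irrational α)
    (hsum : 1/α + 1/β = p) (l : ℕ) (hl : l < p)
    (x y : ℕ → ℤ)
    (hx : ∀ i : ℕ, x i = ⌊α * i⌋)
    (hy : ∀ i : ℕ, y i = ⌊β * i⌋) :
    ∀ k : ℕ,
      Set.ncard {i : ℕ | x (p * i + l) = (k : ℤ)} +
      Set.ncard {i : ℕ | 1 ≤ i ∧ y (p * i - l) = (k : ℤ)} = 1 := by
  intro k
  have hβ : 0 < β := hα.trans hlt
  simp only [hx, hy]
  rw [beattyThreshold.ncard_floor_eq hα hl, beattyThreshold.ncard_floor_sub_eq hα hβ hsum hαirr hl]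
  obtain ⟨hmono, hle⟩ := beattyThreshold.add_one_mem_Icc (l := l) hα hβ hsum k
  refine Int.ncard_Ico_add_ncard_Ioo_eq_one hmono hle fun m => ?_
  exact_mod_cast (beattyThreshold.irrational hαirr (l.zero_le.trans_lt hl).ne'
    k.succ_ne_zero).ne_int m |>.symm

theorem stmt_12 (p : ℕ) (hp : 2 ≤ p) (α β : ℝ) (hα : 0 < α) (hlt : α < β)
    (hαirr : Irrational α) (hβirr : Irrational β)
    (hsum : 1/α + 1/β = p) (l : ℕ) (hl : l < p)
    (x y : ℕ → ℤ)
    (hx : ∀ i : ℕ, x i = ⌊α * i⌋)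
    (hy : ∀ i : ℕ, y i = ⌊β * i⌋) :
    ∀ k : ℕ,
      Set.ncard {i : ℕ | x (p * i + l) = (k : ℤ)} +
      Set.ncard {i : ℕ | 1 ≤ i ∧ y (p * i - l) = (k : ℤ)} = 1 :=
  stmt_12_general p α β hα hlt hαirr hsum l hl x y hx hy
end
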